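/- For j ≤ i < 2l − j (with 0 ≤ j ≤ l), the coefficient A(l,i+1,j) is nonzero; moreover A(l,j,j) = 0 and A(l,2l−j+1,j) = 0. Consequently, in the module G^j the raising operator σ_j(f^+) annihilates only the top basis vector f_{2l−j} and the lowering operator σ_j(f^-) annihilates only f_j. -/
import Mathlib


noncomputable section

/-- The structure constant `A(l,i,j) = ((−1)^{i−j}+1)/16·(i−j) +
((−1)^{i−j+1}+1)/16·(i+j−2l−1)`. -/
def A (l : ℕ) (i j : ℤ) : ℂ :=
  (((-1 : ℂ) ^ (i - j) + 1) / 16) * ((i : ℂ) - (j : ℂ)) +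
    (((-1 : ℂ) ^ (i - j + 1) + 1) / 16) * ((i : ℂ) + (j : ℂ) - 2 * (l : ℂ) - 1)

/-- The basis vector `f_r` of `G^j`, with the convention `f_r = 0` for `r`
outside `{j,…,2l−j}`; modeled inside `ℤ →₀ ℂ`. -/
def fv (l j : ℕ) (r : ℤ) : ℤ →₀ ℂ :=
  if (j : ℤ) ≤ r ∧ r ≤ 2 * l - j then Finsupp.single r 1 else 0

/-- The raising operator `σ_j(f^+) f_i = A(l,i+1,j) f_{i+1}`. -/
def sFp (l j : ℕ) : (ℤ →₀ ℂ) →ₗ[ℂ] (ℤ →₀ ℂ) :=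
  Finsupp.lsum ℂ fun i => LinearMap.toSpanSingleton ℂ _ (A l (i + 1) j • fv l j (i + 1))

/-- The lowering operator `σ_j(f^-) f_i = f_{i−1}`. -/
def sFm (l j : ℕ) : (ℤ →₀ ℂ) →ₗ[ℂ] (ℤ →₀ ℂ) :=
  Finsupp.lsum ℂ fun i => LinearMap.toSpanSingleton ℂ _ (fv l j (i - 1))

/-- `σ_j(h) = 2{σ_j(f^+), σ_j(f^-)}`. -/
def sH (l j : ℕ) : (ℤ →₀ ℂ) →ₗ[ℂ] (ℤ →₀ ℂ) :=
  (2 : ℂ) • (sFp l j ∘ₗ sFm l j + sFm l j ∘ₗ sFp l j)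

/-- `σ_j(e^+) = 2{σ_j(f^+), σ_j(f^+)} = 4 σ_j(f^+)²`. -/
def sEp (l j : ℕ) : (ℤ →₀ ℂ) →ₗ[ℂ] (ℤ →₀ ℂ) := (4 : ℂ) • (sFp l j ∘ₗ sFp l j)

/-- `σ_j(e^-) = −2{σ_j(f^-), σ_j(f^-)} = −4 σ_j(f^-)²`. -/
def sEm (l j : ℕ) : (ℤ →₀ ℂ) →ₗ[ℂ] (ℤ →₀ ℂ) := (-4 : ℂ) • (sFm l j ∘ₗ sFm l j)

/-- The module `G^j = ℂ^{2l−2j+1}`, spanned by the `f_i`, `j ≤ i ≤ 2l−j`. -/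
def Gmod (l j : ℕ) : Submodule ℂ (ℤ →₀ ℂ) :=
  Submodule.span ℂ
    {x | ∃ i : ℤ, (j : ℤ) ≤ i ∧ i ≤ 2 * l - j ∧ x = Finsupp.single i 1}
lemma A_even (l : ℕ) (i j : ℤ) (h : Even (i - j)) :
    A l i j = ((i:ℂ) - j)/8 := by
  have h2 : Odd (i - j + 1) := Even.add_one h
  rw [A, Even.neg_one_zpow h, Odd.neg_one_zpow h2]; ring

lemma A_odd (l : ℕ) (i j : ℤ) (h : Odd (i - j)) :
    A l i j = ((i:ℂ) + j - 2*l - 1)/8 := by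
  have h2 : Even (i - j + 1) := Odd.add_one h
  rw [A, Odd.neg_one_zpow h, Even.neg_one_zpow h2]; ring

lemma A_ne (l j : ℕ) : ∀ i : ℤ, (j : ℤ) ≤ i → i < 2 * l - j → A l (i + 1) j ≠ 0 := by
  intro i h1 h2
  rcases Int.even_or_odd (i - j) with h | h
  · have ho : Odd (i + 1 - j) := by
      rcases h with ⟨k, hk⟩; exact ⟨k, by omega⟩
    rw [A_odd l _ j ho]
    have hz : (i + j - 2*l : ℤ) ≠ 0 := by omega
    have : ((i + j - 2*l : ℤ) : ℂ) ≠ 0 := Int.cast_ne_zero.mpr hz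
    intro hc
    apply this
    push_cast at hc ⊢
    rcases div_eq_zero_iff.mp hc with h' | h'
    · linear_combination h'
    · norm_num at h'
  · have he : Even (i + 1 - j) := by
      rcases h with ⟨k, hk⟩; exact ⟨k+1, by omega⟩
    rw [A_even l _ j he]
    have hz : (i + 1 - j : ℤ) ≠ 0 := by omega
    have : ((i + 1 - j : ℤ) : ℂ) ≠ 0 := Int.cast_ne_zero.mpr hz
    intro hc
    apply this
    push_cast at hc ⊢
    rcases div_eq_zero_iff.mp hc with h' | h'
    · linear_combination h'
    · norm_num at h'

lemma sFp_single (l j : ℕ) (i : ℤ) :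
    sFp l j (Finsupp.single i 1) = A l (i + 1) j • fv l j (i + 1) := by
  simp only [sFp, Finsupp.lsum_single, LinearMap.toSpanSingleton_apply, one_smul]

lemma sFm_single (l j : ℕ) (i : ℤ) :
    sFm l j (Finsupp.single i 1) = fv l j (i - 1) := by
  simp only [sFm, Finsupp.lsum_single, LinearMap.toSpanSingleton_apply, one_smul]

/-- nonvanishing of the structure constants: `A(l,i+1,j) ≠ 0` for
`j ≤ i < 2l−j`, while `A(l,j,j) = 0` and `A(l,2l−j+1,j) = 0`; consequently on
`G^j` the raising operator annihilates only the top vector `f_{2l−j}` and the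
lowering operator annihilates only `f_j`. -/
theorem A_nonzero_in_range (l j : ℕ) (hl : 1 ≤ l) (hj : j ≤ l) :
    (∀ i : ℤ, (j : ℤ) ≤ i → i < 2 * l - j → A l (i + 1) j ≠ 0) ∧
    A l j j = 0 ∧ A l (2 * l - j + 1) j = 0 ∧
    (∀ i : ℤ, (j : ℤ) ≤ i → i ≤ 2 * l - j →
      (sFp l j (Finsupp.single i 1) = 0 ↔ i = 2 * l - j) ∧
      (sFm l j (Finsupp.single i 1) = 0 ↔ i = j)) := by
  refine ⟨A_ne l j, ?_, ?_, ?_⟩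
  · rw [A_even l j j (by simp)]; ring
  · have ho : Odd ((2*l - j + 1 : ℤ) - j) := ⟨(l : ℤ) - j, by ring⟩
    rw [A_odd l _ j ho]; push_cast; ring
  · intro i h1 h2
    constructor
    · rw [sFp_single]
      constructor
      · intro hc
        by_contra hne
        have hlt : i < 2 * l - j := lt_of_le_of_ne h2 hne
        have hA := A_ne l j i h1 hlt
        have hfv : fv l j (i + 1) = Finsupp.single (i+1) 1 := by
          rw [fv, if_pos ⟨by omega, by omega⟩]
        rw [hfv] at hc
        rcases smul_eq_zero.mp hc with h | h
        · exact hA h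
        · exact one_ne_zero (Finsupp.single_eq_zero.mp h)
      · intro he
        have hfv : fv l j (i + 1) = 0 := by
          rw [fv, if_neg]; omega
        rw [hfv, smul_zero]
    · rw [sFm_single]
      constructor
      · intro hc
        by_contra hne
        have hfv : fv l j (i - 1) = Finsupp.single (i-1) 1 := by
          rw [fv, if_pos ⟨by omega, by omega⟩]
        rw [hfv] at hc
        exact one_ne_zero (Finsupp.single_eq_zero.mp hc)
      · intro he
        rw [fv, if_neg]; omega
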